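/- arXiv:2305.09634 — 2 statements merged into one kernel-verified Lean document; each statement's English description precedes it below -/
import Mathlib

section
/- For every strategy σ ∈ Σ^Opt and every state s₀ ∈ S', Pr'_{σ,s₀}(◊T) = Pr_{σ,s₀}(◊T)/Val(s₀). -/
open scoped ENNReal NNReal Classical
open Filter

universe u v

variable {S : Type u} {A : Type v}

/-- A finite MDP: `P s a = some d` means action `a` is legal at `s` and `d` is a
probability distribution on `S`; every state has at least one legal action. -/
structure MDP (S : Type u) (A : Type v) [Fintype S] [Fintype A] where
  P : S → A → Option (S → NNReal)
  sum_one : ∀ s a d, P s a = some d → (∑ s', d s') = 1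
  exists_legal : ∀ s, ∃ a, (P s a).isSome

/-- Last state of an alternating path starting at `s` with steps `steps`. -/
def lastState : S → List (A × S) → S
  | s, [] => s
  | _, (_, s') :: rest => lastState s' rest

/-- A finite path: a start state together with a list of (action, next-state) steps. -/
structure FPath (S : Type u) (A : Type v) where
  start : S
  steps : List (A × S)

namespace FPath

def last (ρ : FPath S A) : S := lastState ρ.start ρ.steps

def states (ρ : FPath S A) : List S := ρ.start :: ρ.steps.map Prod.snd

def length (ρ : FPath S A) : ℕ := ρ.steps.length

end FPath

/-- A (raw) strategy: maps each finite path (start state + steps) to a distribution on actions. -/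
def Strat (S : Type u) (A : Type v) := S → List (A × S) → A → ℝ≥0∞

/-- Shifted strategy `σ_ρ` for `ρ = (s₀, pre)`: `σ_ρ(ρ') = σ(ρ·ρ')`. -/
def shiftStrat (σ : Strat S A) (s₀ : S) (pre : List (A × S)) : Strat S A :=
  fun _ steps a => σ s₀ (pre ++ steps) a

/-- Generic cylinder weight (product of strategy- and transition-probabilities along the
steps), relative to a transition kernel `p`. The accumulator `pre` is the path-prefix so far. -/
noncomputable def wtP (p : S → A → S → ℝ≥0∞) (σ : Strat S A) (s₀ : S) :
    List (A × S) → List (A × S) → ℝ≥0∞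
  | _, [] => 1
  | pre, (a, s') :: rest =>
      σ s₀ pre a * p (lastState s₀ pre) a s' * wtP p σ s₀ (pre ++ [(a, s')]) rest
  termination_by pre l => l.length

/-- Generic cylinder probability of path `ρ` from start state `s`, kernel `p`. -/
noncomputable def cylProbP (p : S → A → S → ℝ≥0∞) (σ : Strat S A) (s : S) (ρ : FPath S A) :
    ℝ≥0∞ :=
  if ρ.start = s then wtP p σ ρ.start [] ρ.steps else 0

namespace MDP

variable [Fintype S] [Fintype A]

def legal (M : MDP S A) (s : S) (a : A) : Prop := (M.P s a).isSome

noncomputable def prob (M : MDP S A) (s : S) (a : A) (s' : S) : ℝ≥0∞ :=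
  (M.P s a).elim 0 fun d => (d s' : ℝ≥0∞)

/-- `ρ` is a finite path of `M` from `s`: every action legal, every transition of
positive probability. -/
def IsPathFrom (M : MDP S A) : S → List (A × S) → Prop
  | _, [] => True
  | s, (a, s') :: rest => M.legal s a ∧ 0 < M.prob s a s' ∧ M.IsPathFrom s' rest

def IsPath (M : MDP S A) (ρ : FPath S A) : Prop := M.IsPathFrom ρ.start ρ.steps

/-- `σ` is a strategy: at every finite path it gives a probability distribution on actions
supported on actions legal at the last state. -/
def IsStrategy (M : MDP S A) (σ : Strat S A) : Prop :=
  ∀ s steps, M.IsPathFrom s steps →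
    (∑ a, σ s steps a) = 1 ∧ ∀ a, 0 < σ s steps a → M.legal (lastState s steps) a

/-- Cylinder probability `P_{σ,s}(ρ)` in `M`. -/
noncomputable def cylProb (M : MDP S A) (σ : Strat S A) (s : S) (ρ : FPath S A) : ℝ≥0∞ :=
  cylProbP M.prob σ s ρ

/-- `T` is a set of sink states: each `t ∈ T` has exactly one legal action, leading back
to `t` with probability `1`. -/
def SinkSet (M : MDP S A) (T : Set S) : Prop :=
  ∀ t ∈ T, (∃! a, M.legal t a) ∧ ∀ a, M.legal t a → M.prob t a t = 1

/-- Generic pruned finite-path predicate: all states have positive value `v` and every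
step uses an `opt` state-action pair with positive transition probability in `M`. -/
def IsPathFromPruned (M : MDP S A) (v : S → ℝ≥0∞) (opt : S → A → Prop) :
    S → List (A × S) → Prop
  | s, [] => 0 < v s
  | s, (a, s') :: rest =>
      0 < v s ∧ opt s a ∧ 0 < M.prob s a s' ∧ M.IsPathFromPruned v opt s' rest

/-! ### Reachability -/

/-- `ρ` is a `T`-hitting path: its last state lies in `T` and no other state does. -/
def HitsFirst (T : Set S) (ρ : FPath S A) : Prop :=
  ρ.last ∈ T ∧ ∀ x ∈ ρ.states.dropLast, x ∉ T

/-- `Pr_{σ,s}(◊T)`: sum over `T`-hitting paths starting at `s` of their cylinder probabilities. -/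
noncomputable def prReach (M : MDP S A) (σ : Strat S A) (s : S) (T : Set S) : ℝ≥0∞ :=
  ∑' ρ : {ρ : FPath S A // M.IsPath ρ ∧ HitsFirst T ρ ∧ ρ.start = s}, M.cylProb σ s ρ.1

/-- `Val(s)` for reachability: supremum over strategies of `Pr_{σ,s}(◊T)`. -/
noncomputable def reachVal (M : MDP S A) (T : Set S) (s : S) : ℝ≥0∞ :=
  ⨆ (σ : Strat S A) (_ : M.IsStrategy σ), M.prReach σ s T

/-- `(s,a) ∈ Opt` for reachability. -/
def OptR (M : MDP S A) (T : Set S) (s : S) (a : A) : Prop :=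
  M.legal s a ∧ M.reachVal T s = ∑ s', M.prob s a s' * M.reachVal T s'

/-- `σ ∈ Σ^Opt` for reachability. -/
def SigmaOptR (M : MDP S A) (T : Set S) (σ : Strat S A) : Prop :=
  ∀ s steps, M.IsPathFrom s steps → ∀ a, 0 < σ s steps a → M.OptR T (lastState s steps) a

/-- Transition probabilities of the pruned MDP `M'` for reachability. -/
noncomputable def probR' (M : MDP S A) (T : Set S) (s : S) (a : A) (s' : S) : ℝ≥0∞ :=
  if M.OptR T s a ∧ 0 < M.reachVal T s then
    M.prob s a s' * M.reachVal T s' / M.reachVal T s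
  else 0

/-- `ρ` is a finite path of the pruned MDP `M'` (reachability version). -/
def IsPathR' (M : MDP S A) (T : Set S) (ρ : FPath S A) : Prop :=
  M.IsPathFromPruned (M.reachVal T) (M.OptR T) ρ.start ρ.steps

/-- Cylinder probability `P'_{σ,s}(ρ)` in the pruned MDP `M'` (reachability version). -/
noncomputable def cylProbR' (M : MDP S A) (T : Set S) (σ : Strat S A) (s : S) (ρ : FPath S A) :
    ℝ≥0∞ :=
  cylProbP (M.probR' T) σ s ρ

/-- `Pr'_{σ,s}(◊T)` in the pruned MDP `M'`. -/
noncomputable def prReach' (M : MDP S A) (σ : Strat S A) (s : S) (T : Set S) : ℝ≥0∞ :=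
  ∑' ρ : {ρ : FPath S A // M.IsPathR' T ρ ∧ HitsFirst T ρ ∧ ρ.start = s},
    M.cylProbR' T σ s ρ.1

/-- Probability of hitting `T` for the first time in exactly `r` steps, in `M`. -/
noncomputable def hitLenProb (M : MDP S A) (σ : Strat S A) (s : S) (T : Set S) (r : ℕ) :
    ℝ≥0∞ :=
  ∑' ρ : {ρ : FPath S A // M.IsPath ρ ∧ HitsFirst T ρ ∧ ρ.start = s ∧ ρ.length = r},
    M.cylProb σ s ρ.1

/-- Probability of hitting `T` for the first time in exactly `r` steps, in `M'`. -/
noncomputable def hitLenProb' (M : MDP S A) (σ : Strat S A) (s : S) (T : Set S) (r : ℕ) :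
    ℝ≥0∞ :=
  ∑' ρ : {ρ : FPath S A // M.IsPathR' T ρ ∧ HitsFirst T ρ ∧ ρ.start = s ∧ ρ.length = r},
    M.cylProbR' T σ s ρ.1

/-- Conditional expected length to target `E_{σ,s}(len_T | ◊T)`. -/
noncomputable def condExpLen (M : MDP S A) (σ : Strat S A) (s : S) (T : Set S) : ℝ≥0∞ :=
  ∑' r : ℕ, (r : ℝ≥0∞) * M.hitLenProb σ s T r / M.prReach σ s T

/-- Expected length to target in `M'`, `E'_{σ,s}(len_T)`; `∞` unless `Pr'_{σ,s}(◊T) = 1`. -/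
noncomputable def expLen' (M : MDP S A) (σ : Strat S A) (s : S) (T : Set S) : ℝ≥0∞ :=
  if M.prReach' σ s T = 1 then ∑' r : ℕ, (r : ℝ≥0∞) * M.hitLenProb' σ s T r else ⊤

/-! ### Safety -/

/-- `Safe_n(σ,s)`: probability of the paths of length `n` from `s` avoiding `Bad`. -/
noncomputable def safeN (M : MDP S A) (σ : Strat S A) (s : S) (Bad : Set S) (n : ℕ) : ℝ≥0∞ :=
  ∑' ρ : {ρ : FPath S A //
      M.IsPath ρ ∧ ρ.start = s ∧ ρ.length = n ∧ ∀ x ∈ ρ.states, x ∉ Bad},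
    M.cylProb σ s ρ.1

/-- `Pr_{σ,s}(□¬Bad) := ⨅ n, Safe_n(σ,s)`. -/
noncomputable def prSafe (M : MDP S A) (σ : Strat S A) (s : S) (Bad : Set S) : ℝ≥0∞ :=
  ⨅ n : ℕ, M.safeN σ s Bad n

/-- `Val(s)` for safety: supremum over strategies of `Pr_{σ,s}(□¬Bad)`. -/
noncomputable def safeVal (M : MDP S A) (Bad : Set S) (s : S) : ℝ≥0∞ :=
  ⨆ (σ : Strat S A) (_ : M.IsStrategy σ), M.prSafe σ s Bad

/-- `(s,a) ∈ Opt` for safety. -/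
def OptS (M : MDP S A) (Bad : Set S) (s : S) (a : A) : Prop :=
  M.legal s a ∧ M.safeVal Bad s = ∑ s', M.prob s a s' * M.safeVal Bad s'

/-- `σ ∈ Σ^Opt` for safety. -/
def SigmaOptS (M : MDP S A) (Bad : Set S) (σ : Strat S A) : Prop :=
  ∀ s steps, M.IsPathFrom s steps → ∀ a, 0 < σ s steps a → M.OptS Bad (lastState s steps) a

/-- `UPreⁱ(Bad)`. -/
def UPre (M : MDP S A) (Bad : Set S) : ℕ → Set S
  | 0 => Bad
  | i + 1 => {s | ∀ a, M.legal s a → ∃ s' ∈ M.UPre Bad i, 0 < M.prob s a s'}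

/-- `Good := S \ UPre*(Bad)`. -/
def GoodSet (M : MDP S A) (Bad : Set S) : Set S := (⋃ i, M.UPre Bad i)ᶜ

/-- `V := S \ (Good ∪ Bad)`. -/
def VSet (M : MDP S A) (Bad : Set S) : Set S := (M.GoodSet Bad ∪ Bad)ᶜ

/-- `Pr_{σ,s}(GoodCyl(ρ)) := P_{σ,s}(ρ) · Pr_{σ_ρ, last(ρ)}(□¬Bad)`. -/
noncomputable def goodCyl (M : MDP S A) (σ : Strat S A) (s : S) (Bad : Set S) (ρ : FPath S A) :
    ℝ≥0∞ :=
  M.cylProb σ s ρ * M.prSafe (shiftStrat σ ρ.start ρ.steps) ρ.last Bad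

/-- Transition probabilities of the pruned MDP `M'` for safety. -/
noncomputable def probS' (M : MDP S A) (Bad : Set S) (s : S) (a : A) (s' : S) : ℝ≥0∞ :=
  if M.OptS Bad s a ∧ 0 < M.safeVal Bad s then
    M.prob s a s' * M.safeVal Bad s' / M.safeVal Bad s
  else 0

/-- `ρ` is a finite path of the pruned MDP `M'` (safety version). -/
def IsPathS' (M : MDP S A) (Bad : Set S) (ρ : FPath S A) : Prop :=
  M.IsPathFromPruned (M.safeVal Bad) (M.OptS Bad) ρ.start ρ.steps

/-- Cylinder probability `P'_{σ,s}(ρ)` in the pruned MDP `M'` (safety version). -/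
noncomputable def cylProbS' (M : MDP S A) (Bad : Set S) (σ : Strat S A) (s : S)
    (ρ : FPath S A) : ℝ≥0∞ :=
  cylProbP (M.probS' Bad) σ s ρ

end MDP

/-- `Reward_n(ρ) = ∑_{i<n} R(sᵢ, aᵢ)` for `ρ` starting at `s` with steps `steps`. -/
def rewardOf (R : S → A → ℝ) : S → List (A × S) → ℝ
  | _, [] => 0
  | s, (a, s') :: rest => R s a + rewardOf R s' rest

namespace MDP

variable [Fintype S] [Fintype A]

/-- `E'_{σ,s}(Reward_n)` in the pruned MDP `M'` (safety version). -/
noncomputable def expRewN' (M : MDP S A) (Bad : Set S) (R : S → A → ℝ) (σ : Strat S A)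
    (s : S) (n : ℕ) : ℝ :=
  ∑' ρ : {ρ : FPath S A // M.IsPathS' Bad ρ ∧ ρ.start = s ∧ ρ.length = n},
    (M.cylProbS' Bad σ s ρ.1).toReal * rewardOf R ρ.1.start ρ.1.steps

/-- `E'_{σ,s}(MP) := liminf_n (1/n)·E'_{σ,s}(Reward_n)`. -/
noncomputable def mp' (M : MDP S A) (Bad : Set S) (R : S → A → ℝ) (σ : Strat S A) (s : S) :
    ℝ :=
  Filter.atTop.liminf fun n : ℕ => M.expRewN' Bad R σ s n / n

/-- `E_{σ,s}(Reward_n | □¬Bad)`. -/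
noncomputable def condExpRewN (M : MDP S A) (Bad : Set S) (R : S → A → ℝ) (σ : Strat S A)
    (s : S) (n : ℕ) : ℝ :=
  (∑' ρ : {ρ : FPath S A // M.IsPath ρ ∧ ρ.start = s ∧ ρ.length = n},
    (M.goodCyl σ s Bad ρ.1).toReal * rewardOf R ρ.1.start ρ.1.steps) /
  (M.prSafe σ s Bad).toReal

/-- `E_{σ,s}(MP | □¬Bad) := liminf_n (1/n)·E_{σ,s}(Reward_n | □¬Bad)`. -/
noncomputable def condMP (M : MDP S A) (Bad : Set S) (R : S → A → ℝ) (σ : Strat S A)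
    (s : S) : ℝ :=
  Filter.atTop.liminf fun n : ℕ => M.condExpRewN Bad R σ s n / n

end MDP

/-!
Along a path of `M'` the transition weights `P(s,a,s')·Val(s')/Val(s)` telescope, so
`P'_{σ,s₀}(ρ)·Val(s₀) = P_{σ,s₀}(ρ)·Val(last ρ)`, and `Val(last ρ) = 1` on `T`-hitting paths.
Conversely, a strategy in `Σ^Opt` only moves along `Opt` actions, and `Val` stays positive
backwards along such moves, so every `T`-hitting path of positive probability in `M` is already
a path of `M'`. Hence both reachability sums run over the same paths, with weights differing by
the factor `Val(s₀)`.
-/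

theorem lastState_append (s : S) (l₁ l₂ : List (A × S)) :
    lastState s (l₁ ++ l₂) = lastState (lastState s l₁) l₂ := by
  induction l₁ generalizing s with
  | nil => rfl
  | cons x r ih => exact ih x.2

@[simp]
theorem lastState_append_singleton (s : S) (l : List (A × S)) (a : A) (s' : S) :
    lastState s (l ++ [(a, s')]) = s' := by
  rw [lastState_append]; rfl

theorem wtP_nil (p : S → A → S → ℝ≥0∞) (σ : Strat S A) (s₀ : S) (pre : List (A × S)) :
    wtP p σ s₀ pre [] = 1 := by
  rw [wtP]

theorem wtP_cons (p : S → A → S → ℝ≥0∞) (σ : Strat S A) (s₀ : S) (pre : List (A × S))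
    (a : A) (s' : S) (rest : List (A × S)) :
    wtP p σ s₀ pre ((a, s') :: rest) =
      σ s₀ pre a * p (lastState s₀ pre) a s' * wtP p σ s₀ (pre ++ [(a, s')]) rest := by
  rw [wtP]

namespace MDP

theorem HitsFirst.steps_eq_nil {T : Set S} {ρ : FPath S A} (h : HitsFirst T ρ)
    (hstart : ρ.start ∈ T) : ρ.steps = [] := by
  rcases hsteps : ρ.steps with _ | ⟨x, r⟩
  · rfl
  · exact absurd hstart (h.2 _ (by simp [FPath.states, hsteps]))

variable [Fintype S] [Fintype A] (M : MDP S A) {T : Set S}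

theorem isPathFrom_append_singleton {s : S} {pre : List (A × S)} {a : A} {s' : S}
    (h : M.IsPathFrom s pre) (hl : M.legal (lastState s pre) a)
    (hp : 0 < M.prob (lastState s pre) a s') :
    M.IsPathFrom s (pre ++ [(a, s')]) := by
  induction pre generalizing s with
  | nil => exact ⟨hl, hp, trivial⟩
  | cons x r ih => exact ⟨h.1, h.2.1, ih h.2.2 hl hp⟩

theorem IsPathFromPruned.pos {M : MDP S A} {v : S → ℝ≥0∞} {opt : S → A → Prop} {s : S} :
    ∀ {l : List (A × S)}, M.IsPathFromPruned v opt s l → 0 < v s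
  | [], h => h
  | _ :: _, h => h.1

theorem IsPathFromPruned.isPathFrom {M : MDP S A} {v : S → ℝ≥0∞} {opt : S → A → Prop}
    (hopt : ∀ s a, opt s a → M.legal s a) :
    ∀ {s : S} {l : List (A × S)}, M.IsPathFromPruned v opt s l → M.IsPathFrom s l
  | _, [], _ => trivial
  | _, _ :: _, h => ⟨hopt _ _ h.2.1, h.2.2.1, isPathFrom hopt h.2.2.2⟩

theorem prob_mul_reachVal_le {s : S} {a : A} (h : M.OptR T s a) (s' : S) :
    M.prob s a s' * M.reachVal T s' ≤ M.reachVal T s :=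
  h.2 ▸ Finset.single_le_sum (f := fun s' => M.prob s a s' * M.reachVal T s')
    (fun _ _ => zero_le) (Finset.mem_univ s')

theorem reachVal_ne_top_of_optR {s : S} {a : A} {s' : S} (h : M.OptR T s a)
    (hp : 0 < M.prob s a s') (htop : M.reachVal T s ≠ ⊤) : M.reachVal T s' ≠ ⊤ := by
  intro htop'
  have hle := M.prob_mul_reachVal_le h s'
  rw [htop', ENNReal.mul_top hp.ne', top_le_iff] at hle
  exact htop hle

theorem prReach_eq_one_of_mem {t : S} (ht : t ∈ T) (σ : Strat S A) : M.prReach σ t T = 1 := by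
  have hset : {ρ : FPath S A | M.IsPath ρ ∧ HitsFirst T ρ ∧ ρ.start = t} = {⟨t, []⟩} := by
    ext ⟨s, steps⟩
    constructor
    · rintro ⟨-, hhit, rfl : s = t⟩
      obtain rfl : steps = [] := hhit.steps_eq_nil ht
      rfl
    · rintro ⟨⟩
      exact ⟨trivial, ⟨ht, by simp [FPath.states]⟩, rfl⟩
  calc M.prReach σ t T = ∑' ρ, ({⟨t, []⟩} : Set (FPath S A)).indicator (M.cylProb σ t) ρ := by
        rw [← hset]; exact tsum_subtype _ _
    _ = 1 := by
        rw [← tsum_subtype, tsum_singleton]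
        simp [cylProb, cylProbP, wtP_nil]

theorem reachVal_eq_one_of_mem {t : S} (ht : t ∈ T) {σ : Strat S A} (hσ : M.IsStrategy σ) :
    M.reachVal T t = 1 :=
  le_antisymm (iSup₂_le fun σ' _ => (M.prReach_eq_one_of_mem ht σ').le)
    (le_iSup₂_of_le σ hσ (M.prReach_eq_one_of_mem ht σ).ge)

theorem isPathFromPruned_of_wtP_ne_zero {σ : Strat S A} (hopt : M.SigmaOptR T σ) (s₀ : S) :
    ∀ (rest pre : List (A × S)), M.IsPathFrom s₀ pre → wtP M.prob σ s₀ pre rest ≠ 0 →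
      0 < M.reachVal T (lastState s₀ (pre ++ rest)) →
      M.IsPathFromPruned (M.reachVal T) (M.OptR T) (lastState s₀ pre) rest
  | [], _, _, _, hend => by simpa [IsPathFromPruned] using hend
  | (a, s') :: r, pre, hpre, hw, hend => by
    rw [wtP_cons] at hw
    have hσa : σ s₀ pre a ≠ 0 := left_ne_zero_of_mul (left_ne_zero_of_mul hw)
    have hpa : M.prob (lastState s₀ pre) a s' ≠ 0 := right_ne_zero_of_mul (left_ne_zero_of_mul hw)
    have hOpt := hopt s₀ pre hpre a (pos_iff_ne_zero.mpr hσa)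
    have hrest : M.IsPathFromPruned (M.reachVal T) (M.OptR T) s' r := by
      simpa using isPathFromPruned_of_wtP_ne_zero hopt s₀ r (pre ++ [(a, s')])
        (M.isPathFrom_append_singleton hpre hOpt.1 (pos_iff_ne_zero.mpr hpa))
        (right_ne_zero_of_mul hw) (by simpa using hend)
    refine ⟨?_, hOpt, pos_iff_ne_zero.mpr hpa, hrest⟩
    exact (ENNReal.mul_pos hpa hrest.pos.ne').trans_le (M.prob_mul_reachVal_le hOpt s')

theorem wtP_probR'_mul_reachVal (σ : Strat S A) (s₀ : S) :
    ∀ (rest pre : List (A × S)),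
      M.IsPathFromPruned (M.reachVal T) (M.OptR T) (lastState s₀ pre) rest →
      M.reachVal T (lastState s₀ pre) ≠ ⊤ →
      wtP (M.probR' T) σ s₀ pre rest * M.reachVal T (lastState s₀ pre)
        = wtP M.prob σ s₀ pre rest * M.reachVal T (lastState s₀ (pre ++ rest))
  | [], pre, _, _ => by simp [wtP_nil]
  | (a, s') :: r, pre, ⟨hVs, hOpt, hps, hrest⟩, htop => by
    have hstep : M.probR' T (lastState s₀ pre) a s' * M.reachVal T (lastState s₀ pre)
        = M.prob (lastState s₀ pre) a s' * M.reachVal T s' := by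
      rw [probR', if_pos ⟨hOpt, hVs⟩]
      exact ENNReal.div_mul_cancel hVs.ne' htop
    have ih := wtP_probR'_mul_reachVal σ s₀ r (pre ++ [(a, s')]) (by simpa using hrest)
      (by simpa using M.reachVal_ne_top_of_optR hOpt hps htop)
    simp only [lastState_append_singleton, List.append_assoc, List.singleton_append] at ih
    rw [wtP_cons, wtP_cons]
    calc _ = σ s₀ pre a * (M.probR' T (lastState s₀ pre) a s' * M.reachVal T (lastState s₀ pre))
          * wtP (M.probR' T) σ s₀ (pre ++ [(a, s')]) r := by ring
      _ = σ s₀ pre a * M.prob (lastState s₀ pre) a s'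
          * (wtP (M.probR' T) σ s₀ (pre ++ [(a, s')]) r * M.reachVal T s') := by
        rw [hstep]; ring
      _ = _ := by rw [ih]; ring

variable {σ : Strat S A}

theorem cylProbR'_eq_cylProb_div (hσ : M.IsStrategy σ) {ρ : FPath S A} (hρ : M.IsPathR' T ρ)
    (hlast : ρ.last ∈ T) :
    M.cylProbR' T σ ρ.start ρ = M.cylProb σ ρ.start ρ / M.reachVal T ρ.start := by
  have hVlast := M.reachVal_eq_one_of_mem hlast hσ
  simp only [cylProbR', cylProb, cylProbP]
  by_cases htop : M.reachVal T ρ.start = ⊤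
  -- Both sides vanish: `ρ` is not trivial since `Val = 1` on `T`, and its first step has
  -- `M'`-weight `x / ⊤ = 0`.
  · rcases hsteps : ρ.steps with _ | ⟨⟨a, s'⟩, r⟩
    · have hstart : ρ.last = ρ.start := by simp [FPath.last, hsteps, lastState]
      simp [hstart, htop] at hVlast
    · simp [wtP_cons, probR', htop, lastState]
  · have h := M.wtP_probR'_mul_reachVal σ ρ.start ρ.steps [] hρ htop
    rw [List.nil_append, ← FPath.last, hVlast, mul_one] at h
    exact (ENNReal.eq_div_iff hρ.pos.ne' htop).mpr (by rw [mul_comm]; exact h)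

theorem isPathR'_of_cylProb_ne_zero (hσ : M.IsStrategy σ) (hopt : M.SigmaOptR T σ)
    {ρ : FPath S A} (hlast : ρ.last ∈ T) (hne : M.cylProb σ ρ.start ρ ≠ 0) :
    M.IsPathR' T ρ := by
  simp only [cylProb, cylProbP] at hne
  refine M.isPathFromPruned_of_wtP_ne_zero hopt ρ.start ρ.steps [] trivial hne ?_
  rw [List.nil_append, ← FPath.last, M.reachVal_eq_one_of_mem hlast hσ]
  exact one_pos

end MDP

theorem stmt3_general {S : Type u} {A : Type v} [Fintype S] [Fintype A]
    (M : MDP S A) (T : Set S)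
    (σ : Strat S A) (hσ : M.IsStrategy σ) (hopt : M.SigmaOptR T σ)
    (s₀ : S) :
    M.prReach' σ s₀ T = M.prReach σ s₀ T / M.reachVal T s₀ := by
  set X := {ρ : FPath S A | M.IsPath ρ ∧ MDP.HitsFirst T ρ ∧ ρ.start = s₀}
  set X' := {ρ : FPath S A | M.IsPathR' T ρ ∧ MDP.HitsFirst T ρ ∧ ρ.start = s₀}
  have hsame : X.indicator (M.cylProb σ s₀) = X'.indicator (M.cylProb σ s₀) := by
    ext ρ
    simp only [Set.indicator_apply]
    split_ifs with hX hX' hX' <;> try rfl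
    · obtain ⟨-, hhit, rfl⟩ := hX
      by_contra hne
      exact hX' ⟨M.isPathR'_of_cylProb_ne_zero hσ hopt hhit.1 hne, hhit, rfl⟩
    · exact absurd ⟨hX'.1.isPathFrom fun _ _ h => h.1, hX'.2⟩ hX
  calc M.prReach' σ s₀ T = ∑' ρ : X', M.cylProb σ s₀ ρ / M.reachVal T s₀ := by
        refine tsum_congr fun ⟨ρ, hρ, hhit, hstart⟩ => ?_
        subst hstart
        exact M.cylProbR'_eq_cylProb_div hσ hρ hhit.1
    _ = M.prReach σ s₀ T / M.reachVal T s₀ := by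
        simp only [div_eq_mul_inv, ENNReal.tsum_mul_right]
        rw [tsum_subtype, ← hsame, ← tsum_subtype]
        rfl

/-- for `σ ∈ Σ^Opt` and `s₀ ∈ S'`, `Pr'_{σ,s₀}(◊T) = Pr_{σ,s₀}(◊T)/Val(s₀)`. -/
theorem stmt3 {S : Type u} {A : Type v} [Fintype S] [Fintype A] [Nonempty S] [Nonempty A]
    (M : MDP S A) (T : Set S) (hT : M.SinkSet T)
    (σ : Strat S A) (hσ : M.IsStrategy σ) (hopt : M.SigmaOptR T σ)
    (s₀ : S) (hs₀ : 0 < M.reachVal T s₀) :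
    M.prReach' σ s₀ T = M.prReach σ s₀ T / M.reachVal T s₀ :=
  stmt3_general M T σ hσ hopt s₀
end

section
/- For every state s ∈ S, Val(s) = 1 if and only if s ∈ Good. -/
open scoped ENNReal NNReal Classical
open Filter

universe u v

variable {S : Type u} {A : Type v}

/-!
Let `ε > 0` be the least positive transition probability. From a state of `UPreⁱ(Bad)` every
legal action reaches `UPreⁱ⁻¹(Bad)` with probability at least `ε`, so by induction every
strategy enters `Bad` within `i` steps with probability at least `εⁱ`, and `Val(s) ≤ 1 - εⁱ`.
Because `Bad` consists of sinks the levels `UPreⁱ(Bad)` increase; hence at a state of `Good`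
some legal action has all its successors in `Good` (otherwise the state would lie in the level
after the largest one met by its successors). The memoryless strategy playing such actions
never leaves `Good`, which is disjoint from `Bad`, so it is safe with probability one.
-/

lemma sum_mul_le_of_sum_eq_one {ι : Type*} [Fintype ι] {d Y : ι → ℝ≥0∞} {c : ℝ≥0∞}
    (hd : ∑ i, d i = 1) (hY : ∀ i, d i ≠ 0 → Y i ≤ c) : ∑ i, d i * Y i ≤ c :=
  calc ∑ i, d i * Y i ≤ ∑ i, d i * c := Finset.sum_le_sum fun i _ => by
          by_cases h : d i = 0
          · simp [h]
          · exact mul_le_mul_right (hY i h) _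
    _ = c := by rw [← Finset.sum_mul, hd, one_mul]

lemma sum_mul_eq_of_sum_eq_one {ι : Type*} [Fintype ι] {d Y : ι → ℝ≥0∞} {c : ℝ≥0∞}
    (hd : ∑ i, d i = 1) (hY : ∀ i, d i ≠ 0 → Y i = c) : ∑ i, d i * Y i = c :=
  calc ∑ i, d i * Y i = ∑ i, d i * c := Finset.sum_congr rfl fun i _ => by
          by_cases h : d i = 0
          · simp [h]
          · rw [hY i h]
    _ = c := by rw [← Finset.sum_mul, hd, one_mul]

lemma sum_mul_add_le_one_of_sum_eq_one {ι : Type*} [Fintype ι]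
    {d Y : ι → ℝ≥0∞} {δ : ℝ≥0∞} {i₀ : ι} (hd : ∑ i, d i = 1) (hY : ∀ i, d i ≠ 0 → Y i ≤ 1)
    (hi₀ : Y i₀ + δ ≤ 1) : ∑ i, d i * Y i + d i₀ * δ ≤ 1 := by
  have hsplit : ∑ i, d i * Y i + d i₀ * δ = ∑ i, d i * (Y i + if i = i₀ then δ else 0) := by
    simp [mul_add, Finset.sum_add_distrib, mul_ite]
  rw [hsplit]
  refine sum_mul_le_of_sum_eq_one hd fun i hi => ?_
  split_ifs with h
  · exact h ▸ hi₀
  · simpa using hY i hi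

lemma wtP_cons_eq_shiftStrat (p : S → A → S → ℝ≥0∞) (σ : Strat S A) (s : S) (a : A) (s' : S)
    (rest pre : List (A × S)) :
    wtP p σ s ((a, s') :: pre) rest = wtP p (shiftStrat σ s [(a, s')]) s' pre rest := by
  induction rest generalizing pre with
  | nil => rw [wtP, wtP]
  | cons x rest ih =>
    obtain ⟨b, t⟩ := x
    simp only [wtP, List.cons_append]
    rw [ih]
    rfl

lemma cylProbP_cons (p : S → A → S → ℝ≥0∞) (σ : Strat S A) (s : S) (a : A) (s' : S)
    (ρ : FPath S A) (hρ : ρ.start = s') :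
    cylProbP p σ s ⟨s, (a, s') :: ρ.steps⟩ =
      σ s [] a * p s a s' * cylProbP p (shiftStrat σ s [(a, s')]) s' ρ := by
  obtain ⟨_, steps⟩ := ρ
  subst hρ
  rw [cylProbP, cylProbP, if_pos rfl, if_pos rfl, wtP, List.nil_append, wtP_cons_eq_shiftStrat]
  rfl

namespace MDP

variable [Fintype S] [Fintype A] {M : MDP S A} {Bad : Set S} {σ : Strat S A} {s s' : S} {a : A}

lemma legal_of_prob_pos (h : 0 < M.prob s a s') : M.legal s a := by
  unfold MDP.prob at h
  unfold MDP.legal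
  cases hP : M.P s a <;> simp_all

lemma sum_prob (h : M.legal s a) : ∑ s', M.prob s a s' = 1 := by
  obtain ⟨d, hd⟩ := Option.isSome_iff_exists.mp h
  simp only [MDP.prob, hd, Option.elim]
  rw [← ENNReal.ofNNReal_finsetSum, M.sum_one s a d hd, ENNReal.coe_one]

lemma exists_pos_le_prob (M : MDP S A) :
    ∃ ε : ℝ≥0∞, 0 < ε ∧ ε ≤ 1 ∧ ∀ s a s', 0 < M.prob s a s' → ε ≤ M.prob s a s' := by
  refine ⟨(Finset.univ.inf fun t : S × A × S =>
      if 0 < M.prob t.1 t.2.1 t.2.2 then M.prob t.1 t.2.1 t.2.2 else 1) ⊓ 1, ?_, inf_le_right, ?_⟩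
  · refine lt_inf_iff.mpr ⟨(Finset.lt_inf_iff ENNReal.zero_lt_top).mpr fun t _ => ?_, zero_lt_one⟩
    split_ifs with h
    exacts [h, zero_lt_one]
  · intro s a s' h
    refine inf_le_left.trans ((Finset.inf_le (Finset.mem_univ (s, a, s'))).trans ?_)
    simp [h]

def IsStrategyFrom (M : MDP S A) (σ : Strat S A) (s : S) : Prop :=
  ∀ steps, M.IsPathFrom s steps →
    (∑ a, σ s steps a) = 1 ∧ ∀ a, 0 < σ s steps a → M.legal (lastState s steps) a

lemma IsStrategy.isStrategyFrom (h : M.IsStrategy σ) (s : S) : M.IsStrategyFrom σ s :=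
  h s

lemma IsStrategyFrom.shiftStrat (h : M.IsStrategyFrom σ s) (ha : M.legal s a)
    (hp : 0 < M.prob s a s') : M.IsStrategyFrom (shiftStrat σ s [(a, s')]) s' :=
  fun steps hsteps => h ((a, s') :: steps) ⟨ha, hp, hsteps⟩

lemma IsStrategyFrom.legal (h : M.IsStrategyFrom σ s) (ha : σ s [] a ≠ 0) : M.legal s a :=
  (h [] trivial).2 a (pos_iff_ne_zero.mpr ha)

abbrev SafePaths (M : MDP S A) (Bad : Set S) (s : S) (n : ℕ) : Type _ :=
  {ρ : FPath S A // M.IsPath ρ ∧ ρ.start = s ∧ ρ.length = n ∧ ∀ x ∈ ρ.states, x ∉ Bad}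

lemma isEmpty_safePaths (hs : s ∈ Bad) (n : ℕ) : IsEmpty (M.SafePaths Bad s n) :=
  ⟨by rintro ⟨⟨_, _⟩, -, rfl, -, hsafe⟩; exact hsafe _ List.mem_cons_self hs⟩

def consSafePath (hs : s ∉ Bad) {n : ℕ}
    (x : Σ q : {q : A × S // 0 < M.prob s q.1 q.2}, M.SafePaths Bad q.1.2 n) :
    M.SafePaths Bad s (n + 1) :=
  ⟨⟨s, x.1.1 :: x.2.1.steps⟩, by
    obtain ⟨⟨⟨a, s'⟩, hp⟩, ⟨⟨_, steps⟩, hpath, hstart, hlen, hsafe⟩⟩ := x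
    obtain rfl : _ = s' := hstart
    refine ⟨⟨legal_of_prob_pos hp, hp, hpath⟩, rfl, by simpa [FPath.length] using hlen, ?_⟩
    simp only [FPath.states, List.map_cons, List.mem_cons] at hsafe ⊢
    rintro x (rfl | rfl | hx)
    exacts [hs, hsafe x (.inl rfl), hsafe x (.inr hx)]⟩

lemma consSafePath_bijective (hs : s ∉ Bad) (n : ℕ) :
    Function.Bijective (consSafePath (M := M) hs (n := n)) := by
  constructor
  · rintro ⟨⟨q, hq⟩, ⟨⟨t, steps⟩, hρ⟩⟩ ⟨⟨q', hq'⟩, ⟨⟨t', steps'⟩, hρ'⟩⟩ h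
    simp only [consSafePath, Subtype.mk.injEq, FPath.mk.injEq, List.cons.injEq, true_and] at h
    obtain ⟨rfl, rfl⟩ := h
    obtain rfl : t = t' := hρ.2.1.trans hρ'.2.1.symm
    rfl
  · rintro ⟨⟨_, steps⟩, hpath, rfl, hlen, hsafe⟩
    obtain _ | ⟨⟨a, s'⟩, rest⟩ := steps
    · simp [FPath.length] at hlen
    obtain ⟨-, hp, hrest⟩ := hpath
    refine ⟨⟨⟨⟨a, s'⟩, hp⟩, ⟨⟨s', rest⟩, hrest, rfl, by simpa [FPath.length] using hlen, ?_⟩⟩, rfl⟩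
    intro x hx
    exact hsafe x (List.mem_cons_of_mem _ (by simpa [FPath.states] using hx))

lemma safeN_of_mem (σ : Strat S A) (hs : s ∈ Bad) (n : ℕ) : M.safeN σ s Bad n = 0 :=
  have := isEmpty_safePaths (M := M) hs n
  tsum_empty

lemma safeN_zero (σ : Strat S A) (s : S) :
    M.safeN σ s Bad 0 = if s ∈ Bad then 0 else 1 := by
  split_ifs with hs
  · exact safeN_of_mem σ hs 0
  · rw [MDP.safeN, tsum_eq_single
      (⟨⟨s, []⟩, trivial, rfl, rfl, by simpa [FPath.states]⟩ : M.SafePaths Bad s 0)]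
    · simp [MDP.cylProb, cylProbP, wtP]
    · rintro ⟨⟨_, steps⟩, hρ⟩ hne
      refine absurd (Subtype.ext ?_) hne
      simp only [FPath.mk.injEq]
      exact ⟨hρ.2.1, List.length_eq_zero_iff.mp hρ.2.2.1⟩

lemma safeN_succ (σ : Strat S A) (s : S) (n : ℕ) :
    M.safeN σ s Bad (n + 1) = if s ∈ Bad then 0 else
      ∑ a, σ s [] a * ∑ s', M.prob s a s' * M.safeN (shiftStrat σ s [(a, s')]) s' Bad n := by
  split_ifs with hs
  · exact safeN_of_mem σ hs (n + 1)
  let f : A × S → ℝ≥0∞ := fun q =>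
    σ s [] q.1 * M.prob s q.1 q.2 * M.safeN (shiftStrat σ s [q]) q.2 Bad n
  calc M.safeN σ s Bad (n + 1)
      = ∑' x, M.cylProb σ s (consSafePath hs x).1 :=
        ((Equiv.ofBijective _ (consSafePath_bijective hs n)).tsum_eq _).symm
    _ = ∑' q : {q : A × S // 0 < M.prob s q.1 q.2}, f q := by
        rw [ENNReal.tsum_sigma']
        refine tsum_congr fun q => ?_
        simp only [f, MDP.safeN]
        rw [← ENNReal.tsum_mul_left]
        exact tsum_congr fun ρ => cylProbP_cons _ _ _ _ _ _ ρ.2.2.1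
    _ = ∑ q, f q := by
        refine (tsum_subtype_eq_of_support_subset (s := {q | 0 < M.prob s q.1 q.2}) ?_).trans
          (tsum_fintype f)
        intro q hq
        refine pos_iff_ne_zero.mpr fun h : M.prob s q.1 q.2 = 0 => hq ?_
        simp only [f, h, mul_zero, zero_mul]
    _ = _ := by
        simp only [f, Fintype.sum_prod_type, mul_assoc, Finset.mul_sum]

lemma safeN_le_one (hσ : M.IsStrategyFrom σ s) (n : ℕ) : M.safeN σ s Bad n ≤ 1 := by
  induction n generalizing σ s with
  | zero => rw [safeN_zero]; split_ifs <;> simp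
  | succ n ih =>
    rw [safeN_succ]
    split_ifs
    · exact zero_le
    refine sum_mul_le_of_sum_eq_one (hσ [] trivial).1 fun a ha => ?_
    have hleg := hσ.legal ha
    exact sum_mul_le_of_sum_eq_one (sum_prob hleg) fun s' hp =>
      ih (hσ.shiftStrat hleg (pos_iff_ne_zero.mpr hp))

lemma safeN_add_pow_le_one {ε : ℝ≥0∞} (hε₁ : ε ≤ 1)
    (hε : ∀ s a s', 0 < M.prob s a s' → ε ≤ M.prob s a s') {i : ℕ} (hs : s ∈ M.UPre Bad i)
    (hσ : M.IsStrategyFrom σ s) : M.safeN σ s Bad i + ε ^ i ≤ 1 := by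
  induction i generalizing σ s with
  | zero => simp [safeN_zero, show s ∈ Bad from hs]
  | succ i ih =>
    rw [safeN_succ]
    split_ifs
    · simpa using pow_le_one₀ zero_le hε₁
    have hσ₁ := (hσ [] trivial).1
    rw [show ε ^ (i + 1) = ∑ a, σ s [] a * ε ^ (i + 1) by rw [← Finset.sum_mul, hσ₁, one_mul],
      ← Finset.sum_add_distrib]
    simp_rw [← mul_add]
    refine sum_mul_le_of_sum_eq_one hσ₁ fun a ha => ?_
    have hleg := hσ.legal ha
    obtain ⟨s₀, hs₀, hp₀⟩ := hs a hleg
    calc ∑ s', M.prob s a s' * M.safeN (shiftStrat σ s [(a, s')]) s' Bad i + ε ^ (i + 1)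
        ≤ ∑ s', M.prob s a s' * M.safeN (shiftStrat σ s [(a, s')]) s' Bad i
          + M.prob s a s₀ * ε ^ i := by
          rw [pow_succ']
          gcongr
          exact hε _ _ _ hp₀
      _ ≤ 1 := sum_mul_add_le_one_of_sum_eq_one (sum_prob hleg)
          (fun s' hp => safeN_le_one (hσ.shiftStrat hleg (pos_iff_ne_zero.mpr hp)) i)
          (ih hs₀ (hσ.shiftStrat hleg hp₀))

def KeepsIn (M : MDP S A) (σ : Strat S A) (s : S) (G : Set S) : Prop :=
  ∀ steps, M.IsPathFrom s steps → lastState s steps ∈ G →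
    ∀ a, 0 < σ s steps a → ∀ s', 0 < M.prob (lastState s steps) a s' → s' ∈ G

lemma KeepsIn.shiftStrat {G : Set S} (h : M.KeepsIn σ s G) (ha : M.legal s a)
    (hp : 0 < M.prob s a s') : M.KeepsIn (shiftStrat σ s [(a, s')]) s' G :=
  fun steps hsteps => h ((a, s') :: steps) ⟨ha, hp, hsteps⟩

lemma safeN_eq_one {G : Set S} (hG : Disjoint G Bad) (hσ : M.IsStrategyFrom σ s)
    (hkeep : M.KeepsIn σ s G) (hs : s ∈ G) (n : ℕ) : M.safeN σ s Bad n = 1 := by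
  induction n generalizing σ s with
  | zero => simp [safeN_zero, hG.notMem_of_mem_left hs]
  | succ n ih =>
    rw [safeN_succ, if_neg (hG.notMem_of_mem_left hs)]
    refine sum_mul_eq_of_sum_eq_one (hσ [] trivial).1 fun a ha => ?_
    have hleg := hσ.legal ha
    refine sum_mul_eq_of_sum_eq_one (sum_prob hleg) fun s' hp => ?_
    have hp := pos_iff_ne_zero.mpr hp
    exact ih (hσ.shiftStrat hleg hp) (hkeep.shiftStrat hleg hp)
      (hkeep [] trivial hs a (pos_iff_ne_zero.mpr ha) s' hp)

noncomputable def memorylessStrat (f : S → A) : Strat S A :=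
  fun t steps a => if a = f (lastState t steps) then 1 else 0

lemma isStrategy_memorylessStrat {f : S → A} (hf : ∀ t, M.legal t (f t)) :
    M.IsStrategy (memorylessStrat f) := by
  refine fun t steps _ => ⟨by simp [memorylessStrat], fun a ha => ?_⟩
  obtain rfl : a = f (lastState t steps) := by
    by_contra h
    simp [memorylessStrat, h] at ha
  exact hf _

lemma keepsIn_memorylessStrat {f : S → A} {G : Set S}
    (hf : ∀ t ∈ G, ∀ s', 0 < M.prob t (f t) s' → s' ∈ G) (s : S) :
    M.KeepsIn (memorylessStrat f) s G := by
  intro steps _ hG a ha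
  obtain rfl : a = f (lastState s steps) := by
    by_contra h
    simp [memorylessStrat, h] at ha
  exact hf _ hG

lemma monotone_UPre (hBad : M.SinkSet Bad) : Monotone (M.UPre Bad) := by
  refine monotone_nat_of_le_succ fun i => ?_
  induction i with
  | zero => exact fun b hb a ha => ⟨b, hb, by simp [(hBad b hb).2 a ha]⟩
  | succ i ih =>
    intro t ht a ha
    obtain ⟨s', hs', hp⟩ := ht a ha
    exact ⟨s', ih hs', hp⟩

lemma disjoint_goodSet : Disjoint (M.GoodSet Bad) Bad :=
  Set.disjoint_left.mpr fun _ hs hb => hs (Set.mem_iUnion.mpr ⟨0, hb⟩)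

lemma exists_legal_forall_mem_goodSet (hBad : M.SinkSet Bad) (hs : s ∈ M.GoodSet Bad) :
    ∃ a, M.legal s a ∧ ∀ s', 0 < M.prob s a s' → s' ∈ M.GoodSet Bad := by
  by_contra! h
  have hidx : ∀ a, ∃ i, M.legal s a → ∃ s' ∈ M.UPre Bad i, 0 < M.prob s a s' := by
    intro a
    by_cases ha : M.legal s a
    · obtain ⟨s', hp, hs'⟩ := h a ha
      obtain ⟨i, hi⟩ := Set.mem_iUnion.mp (Set.notMem_compl_iff.mp hs')
      exact ⟨i, fun _ => ⟨s', hi, hp⟩⟩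
    · exact ⟨0, fun h => absurd h ha⟩
  choose N hN using hidx
  refine hs (Set.mem_iUnion.mpr ⟨Finset.univ.sup N + 1, fun a ha => ?_⟩)
  obtain ⟨s', hs', hp⟩ := hN a ha
  exact ⟨s', monotone_UPre hBad (Finset.le_sup (Finset.mem_univ a)) hs', hp⟩

lemma exists_isStrategy_keepsIn_goodSet (hBad : M.SinkSet Bad) :
    ∃ σ, M.IsStrategy σ ∧ ∀ s, M.KeepsIn σ s (M.GoodSet Bad) := by
  have hact : ∀ t, ∃ a, M.legal t a ∧
      (t ∈ M.GoodSet Bad → ∀ s', 0 < M.prob t a s' → s' ∈ M.GoodSet Bad) := by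
    intro t
    by_cases ht : t ∈ M.GoodSet Bad
    · obtain ⟨a, ha, hgood⟩ := exists_legal_forall_mem_goodSet hBad ht
      exact ⟨a, ha, fun _ => hgood⟩
    · obtain ⟨a, ha⟩ := M.exists_legal t
      exact ⟨a, ha, fun h => absurd h ht⟩
  choose f hleg hgood using hact
  exact ⟨memorylessStrat f, isStrategy_memorylessStrat hleg, keepsIn_memorylessStrat hgood⟩

lemma safeVal_le_one (M : MDP S A) (Bad : Set S) (s : S) : M.safeVal Bad s ≤ 1 :=
  iSup₂_le fun _ hσ => (iInf_le _ 0).trans (safeN_le_one (hσ.isStrategyFrom s) 0)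

lemma safeVal_lt_one_of_mem_UPre {i : ℕ} (hs : s ∈ M.UPre Bad i) : M.safeVal Bad s < 1 := by
  obtain ⟨ε, hε₀, hε₁, hε⟩ := M.exists_pos_le_prob
  have hεi : ε ^ i ≠ ⊤ := ENNReal.pow_ne_top (ne_top_of_le_ne_top ENNReal.one_ne_top hε₁)
  calc M.safeVal Bad s ≤ 1 - ε ^ i := iSup₂_le fun σ hσ => (iInf_le _ i).trans <|
        ENNReal.le_sub_of_add_le_right hεi (safeN_add_pow_le_one hε₁ hε hs (hσ.isStrategyFrom s))
    _ < 1 := ENNReal.sub_lt_self ENNReal.one_ne_top one_ne_zero (pow_ne_zero i hε₀.ne')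

lemma safeVal_eq_one_of_mem_goodSet (hBad : M.SinkSet Bad) (hs : s ∈ M.GoodSet Bad) :
    M.safeVal Bad s = 1 := by
  obtain ⟨σ, hσ, hkeep⟩ := exists_isStrategy_keepsIn_goodSet hBad
  refine le_antisymm (M.safeVal_le_one Bad s) (le_iSup₂_of_le σ hσ (le_iInf fun n => ?_))
  exact (safeN_eq_one disjoint_goodSet (hσ.isStrategyFrom s) (hkeep s) hs n).ge

end MDP

theorem stmt10_general {S : Type u} {A : Type v} [Fintype S] [Fintype A]
    (M : MDP S A) (Bad : Set S) (hBad : M.SinkSet Bad) (s : S) :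
    M.safeVal Bad s = 1 ↔ s ∈ M.GoodSet Bad := by
  refine ⟨fun hval => ?_, M.safeVal_eq_one_of_mem_goodSet hBad⟩
  by_contra hs
  obtain ⟨i, hi⟩ := Set.mem_iUnion.mp (Set.notMem_compl_iff.mp hs)
  exact (M.safeVal_lt_one_of_mem_UPre hi).ne hval

/-- for every state `s`, `Val(s) = 1` iff `s ∈ Good`. -/
theorem stmt10 {S : Type u} {A : Type v} [Fintype S] [Fintype A] [Nonempty S] [Nonempty A]
    (M : MDP S A) (Bad : Set S) (hBad : M.SinkSet Bad) (s : S) :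
    M.safeVal Bad s = 1 ↔ s ∈ M.GoodSet Bad :=
  stmt10_general M Bad hBad s
end
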